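/- Let k ∈ ℕ, fix i with 1 ≤ i ≤ k−1 and t_i ∈ ℂ nonzero. Define ψ₀(ζ^m v^n) = z^{nk−m} u^n and ψ₁(ζ^m v^n) = n t_i z^{(n−1)k − m + i} u^{n−1} as linear maps ℂ[ζ,v] → ℂ[z^{±1}, u], and let {f,g} denote the Poisson bracket with {z^a u^b, z^c u^d} = (ad−bc) z^{a+c} u^{b+d} on ℂ[z^{±1},u] and {ζ^a v^b, ζ^c v^d} = −(ad−bc) ζ^{a+c} v^{b+d} on ℂ[ζ,v]. Then ψ₁({ζ^a v^b, ζ^c v^d}) − {ψ₀(ζ^a v^b), ψ₁(ζ^c v^d)} − {ψ₁(ζ^a v^b), ψ₀(ζ^c v^d)} = −(ad − bc) t_i z^{(b+d−1)k − (a+c) + i} u^{b+d−1}; in particular it is nonzero whenever ad ≠ bc. -/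

import Mathlib

/-!
Every term is a single monomial: after applying `ψ₀`, `ψ₁` and the bracket, all three land on
`z^{(b+d−1)k−(a+c)+i} u^{b+d−1}`, and the coefficients sum to `t(bc − ad)` by a polynomial
identity. The truncated exponent `n − 1` in `ψ₁` is harmless because it only occurs with the
coefficient `n t`, which vanishes when `n = 0`.
-/

noncomputable section

abbrev LaurR : Type := AddMonoidAlgebra ℂ (ℤ × ℕ)

/-- The monomial `c · z^e u^n`. -/
def mon (e : ℤ) (n : ℕ) (c : ℂ) : LaurR := AddMonoidAlgebra.single (e, n) c

lemma mon_smul (x : ℂ) (e : ℤ) (n : ℕ) (c : ℂ) : x • mon e n c = mon e n (x * c) :=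
  AddMonoidAlgebra.smul_single' x (e, n) c

lemma mon_sub_sub_eq {e₁ e₂ e₃ e : ℤ} {n : ℕ} {c₁ c₂ c₃ c : ℂ} (h₁ : e₁ = e) (h₂ : e₂ = e)
    (h₃ : e₃ = e) (hc : c₁ - c₂ - c₃ = c) : mon e₁ n c₁ - mon e₂ n c₂ - mon e₃ n c₃ = mon e n c := by
  subst h₁ h₂ h₃ hc
  simp [mon, AddMonoidAlgebra.single_sub]

lemma mon_eq_zero_iff (e : ℤ) (n : ℕ) (c : ℂ) : mon e n c = 0 ↔ c = 0 :=
  AddMonoidAlgebra.single_eq_zero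

lemma mon_zero (e : ℤ) (n : ℕ) : mon e n 0 = 0 := (mon_eq_zero_iff e n 0).2 rfl

/-- The log-canonical Poisson bracket `{z, u} = z u`, given on monomials. -/
def IsLogCanonicalBracket (br : LaurR →ₗ[ℂ] LaurR →ₗ[ℂ] LaurR) : Prop :=
  ∀ (a c : ℤ) (b d : ℕ), br (mon a b 1) (mon c d 1) = mon (a + c) (b + d) ((a * d - b * c : ℤ))

namespace IsLogCanonicalBracket

variable {br : LaurR →ₗ[ℂ] LaurR →ₗ[ℂ] LaurR} (hbr : IsLogCanonicalBracket br)
include hbr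

lemma apply_mon (p q : ℤ) (m n : ℕ) (x y : ℂ) :
    br (mon p m x) (mon q n y) = mon (p + q) (m + n) (x * y * ((p * n - m * q : ℤ) : ℂ)) := by
  rw [← mul_one x, ← mul_one y, ← mon_smul, ← mon_smul, LinearMap.map_smul₂, map_smul, hbr,
    mon_smul, mon_smul, mul_one, mul_one, mul_assoc]

lemma apply_mon_pred_right (p q : ℤ) (m n : ℕ) (x y : ℂ) :
    br (mon p m x) (mon q (n - 1) (n * y)) =
      mon (p + q) (m + n - 1) (n * x * y * ((p * ((n : ℤ) - 1) - m * q : ℤ) : ℂ)) := by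
  cases n with
  | zero => simp [mon_zero]
  | succ n =>
    rw [apply_mon hbr]
    congr 1
    push_cast; ring

lemma apply_mon_pred_left (p q : ℤ) (m n : ℕ) (x y : ℂ) :
    br (mon p (m - 1) (m * x)) (mon q n y) =
      mon (p + q) (m + n - 1) (m * x * y * ((p * n - ((m : ℤ) - 1) * q : ℤ) : ℂ)) := by
  cases m with
  | zero => simp [mon_zero]
  | succ m =>
    rw [apply_mon hbr]
    congr 1
    · omega
    · push_cast; ring

end IsLogCanonicalBracket

open MvPolynomial in
lemma obstruction_mon (k i : ℕ) (t : ℂ) (psi0 psi1 : MvPolynomial (Fin 2) ℂ →ₗ[ℂ] LaurR)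
    (h0 : ∀ m n : ℕ, psi0 (X 0 ^ m * X 1 ^ n) = mon ((n : ℤ) * k - m) n 1)
    (h1 : ∀ m n : ℕ, psi1 (X 0 ^ m * X 1 ^ n) = mon (((n : ℤ) - 1) * k - m + i) (n - 1) (n * t))
    (br : LaurR →ₗ[ℂ] LaurR →ₗ[ℂ] LaurR) (hbr : IsLogCanonicalBracket br) (a b c d : ℕ) :
    psi1 ((-((a * d - b * c : ℤ) : ℂ)) • (X 0 ^ (a + c) * X 1 ^ (b + d)))
      - br (psi0 (X 0 ^ a * X 1 ^ b)) (psi1 (X 0 ^ c * X 1 ^ d))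
      - br (psi1 (X 0 ^ a * X 1 ^ b)) (psi0 (X 0 ^ c * X 1 ^ d))
      = mon (((b : ℤ) + d - 1) * k - (a + c) + i) (b + d - 1) (-((a * d - b * c : ℤ) : ℂ) * t) := by
  rw [map_smul, h1, h0, h1, h1, h0, mon_smul, hbr.apply_mon_pred_right,
    hbr.apply_mon_pred_left]
  apply mon_sub_sub_eq <;> push_cast <;> ring

theorem stmt11_general (k i : ℕ) (t : ℂ) (ht : t ≠ 0)
    -- ψ₀ and ψ₁, linear maps determined on monomials as stated
    (psi0 psi1 : MvPolynomial (Fin 2) ℂ →ₗ[ℂ] LaurR)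
    (h0 : ∀ m n : ℕ, psi0 (MvPolynomial.X 0 ^ m * MvPolynomial.X 1 ^ n)
      = mon ((n : ℤ) * k - m) n 1)
    (h1 : ∀ m n : ℕ, psi1 (MvPolynomial.X 0 ^ m * MvPolynomial.X 1 ^ n)
      = mon (((n : ℤ) - 1) * k - m + i) (n - 1) ((n : ℂ) * t))
    -- the Poisson bracket on ℂ[z^{±1}, u]: {z^a u^b, z^c u^d} = (ad − bc) z^{a+c} u^{b+d}
    (brW : LaurR →ₗ[ℂ] LaurR →ₗ[ℂ] LaurR)
    (hbrW : ∀ (a c : ℤ) (b d : ℕ), brW (mon a b 1) (mon c d 1)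
      = mon (a + c) (b + d) ((a * d - b * c : ℤ)))
    (a b c d : ℕ) :
    -- ψ₁({ζ^a v^b, ζ^c v^d}) − {ψ₀(ζ^a v^b), ψ₁(ζ^c v^d)} − {ψ₁(ζ^a v^b), ψ₀(ζ^c v^d)}
    -- where {ζ^a v^b, ζ^c v^d} = −(ad−bc) ζ^{a+c} v^{b+d}
    (psi1 ((-((a * d - b * c : ℤ) : ℂ)) •
        (MvPolynomial.X 0 ^ (a + c) * MvPolynomial.X 1 ^ (b + d)))
      - brW (psi0 (MvPolynomial.X 0 ^ a * MvPolynomial.X 1 ^ b))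
          (psi1 (MvPolynomial.X 0 ^ c * MvPolynomial.X 1 ^ d))
      - brW (psi1 (MvPolynomial.X 0 ^ a * MvPolynomial.X 1 ^ b))
          (psi0 (MvPolynomial.X 0 ^ c * MvPolynomial.X 1 ^ d))
      = mon (((b : ℤ) + d - 1) * k - (a + c) + i) (b + d - 1)
          (-((a * d - b * c : ℤ) : ℂ) * t)) ∧
    ((a : ℤ) * d ≠ (b : ℤ) * c →
      psi1 ((-((a * d - b * c : ℤ) : ℂ)) •
          (MvPolynomial.X 0 ^ (a + c) * MvPolynomial.X 1 ^ (b + d)))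
        - brW (psi0 (MvPolynomial.X 0 ^ a * MvPolynomial.X 1 ^ b))
            (psi1 (MvPolynomial.X 0 ^ c * MvPolynomial.X 1 ^ d))
        - brW (psi1 (MvPolynomial.X 0 ^ a * MvPolynomial.X 1 ^ b))
            (psi0 (MvPolynomial.X 0 ^ c * MvPolynomial.X 1 ^ d)) ≠ 0) := by
  have key := obstruction_mon k i t psi0 psi1 h0 h1 brW hbrW a b c d
  refine ⟨key, fun hne => ?_⟩
  rw [key, Ne, mon_eq_zero_iff]
  exact mul_ne_zero (neg_ne_zero.2 (Int.cast_ne_zero.2 (sub_ne_zero.2 hne))) ht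

theorem stmt11 (k i : ℕ) (hi1 : 1 ≤ i) (hik : i ≤ k - 1) (t : ℂ) (ht : t ≠ 0)
    -- ψ₀ and ψ₁, linear maps determined on monomials as stated
    (psi0 psi1 : MvPolynomial (Fin 2) ℂ →ₗ[ℂ] LaurR)
    (h0 : ∀ m n : ℕ, psi0 (MvPolynomial.X 0 ^ m * MvPolynomial.X 1 ^ n)
      = mon ((n : ℤ) * k - m) n 1)
    (h1 : ∀ m n : ℕ, psi1 (MvPolynomial.X 0 ^ m * MvPolynomial.X 1 ^ n)
      = mon (((n : ℤ) - 1) * k - m + i) (n - 1) ((n : ℂ) * t))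
    -- the Poisson bracket on ℂ[z^{±1}, u]: {z^a u^b, z^c u^d} = (ad − bc) z^{a+c} u^{b+d}
    (brW : LaurR →ₗ[ℂ] LaurR →ₗ[ℂ] LaurR)
    (hbrW : ∀ (a c : ℤ) (b d : ℕ), brW (mon a b 1) (mon c d 1)
      = mon (a + c) (b + d) ((a * d - b * c : ℤ)))
    (a b c d : ℕ) :
    -- ψ₁({ζ^a v^b, ζ^c v^d}) − {ψ₀(ζ^a v^b), ψ₁(ζ^c v^d)} − {ψ₁(ζ^a v^b), ψ₀(ζ^c v^d)}
    -- where {ζ^a v^b, ζ^c v^d} = −(ad−bc) ζ^{a+c} v^{b+d}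
    (psi1 ((-((a * d - b * c : ℤ) : ℂ)) •
        (MvPolynomial.X 0 ^ (a + c) * MvPolynomial.X 1 ^ (b + d)))
      - brW (psi0 (MvPolynomial.X 0 ^ a * MvPolynomial.X 1 ^ b))
          (psi1 (MvPolynomial.X 0 ^ c * MvPolynomial.X 1 ^ d))
      - brW (psi1 (MvPolynomial.X 0 ^ a * MvPolynomial.X 1 ^ b))
          (psi0 (MvPolynomial.X 0 ^ c * MvPolynomial.X 1 ^ d))
      = mon (((b : ℤ) + d - 1) * k - (a + c) + i) (b + d - 1)
          (-((a * d - b * c : ℤ) : ℂ) * t)) ∧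
    ((a : ℤ) * d ≠ (b : ℤ) * c →
      psi1 ((-((a * d - b * c : ℤ) : ℂ)) •
          (MvPolynomial.X 0 ^ (a + c) * MvPolynomial.X 1 ^ (b + d)))
        - brW (psi0 (MvPolynomial.X 0 ^ a * MvPolynomial.X 1 ^ b))
            (psi1 (MvPolynomial.X 0 ^ c * MvPolynomial.X 1 ^ d))
        - brW (psi1 (MvPolynomial.X 0 ^ a * MvPolynomial.X 1 ^ b))
            (psi0 (MvPolynomial.X 0 ^ c * MvPolynomial.X 1 ^ d)) ≠ 0) :=
  stmt11_general k i t ht psi0 psi1 h0 h1 brW hbrW a b c d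

end
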